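/- Soft Policy Improvement: Let S, A be finite, γ ∈ [0,1), α > 0, and let Π be a set of full-support policies. Let π_old ∈ Π with soft Q-function Q^{π_old}, and suppose π_new ∈ Π minimizes over π' ∈ Π, for every state s, the KL divergence D_KL( π'(·|s) ‖ exp(Q^{π_old}(s,·)/α) / Z^{π_old}(s) ), where Z^{π_old}(s) = Σ_a exp(Q^{π_old}(s,a)/α). Then Q^{π_new}(s,a) ≥ Q^{π_old}(s,a) for all (s,a) ∈ S × A. -/

import Mathlib

/-!
Minimising the KL divergence to the Boltzmann distribution `exp (Q^{π_old} / α) / Z` is the same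
as maximising the soft value `∑ π (Q^{π_old} - α log π)`, so `π_new` does at least as well as
`π_old` against `Q^{π_old}`. Feeding this into the two Bellman equations, the gap
`D = Q^{π_old} - Q^{π_new}` satisfies `D ≤ γ · max D` pointwise; evaluated at a maximiser this
forces `max D ≤ 0` because `γ < 1`.
-/

open Finset

section

variable {ι A : Type*} [Fintype A]

noncomputable def softValue (α : ℝ) (π Q : A → ℝ) : ℝ :=
  ∑ a, π a * (Q a - α * Real.log (π a))

lemma softValue_sub_softValue (α : ℝ) (π Q₁ Q₂ : A → ℝ) :
    softValue α π Q₁ - softValue α π Q₂ = ∑ a, π a * (Q₁ a - Q₂ a) := by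
  rw [softValue, softValue, ← sum_sub_distrib]
  exact sum_congr rfl fun a _ => by ring

lemma sum_mul_le_of_forall_le [Fintype ι] {w f : ι → ℝ} {M : ℝ} (hw₀ : ∀ i, 0 ≤ w i)
    (hw₁ : ∑ i, w i = 1) (hf : ∀ i, f i ≤ M) : ∑ i, w i * f i ≤ M :=
  calc ∑ i, w i * f i ≤ ∑ i, w i * M :=
        sum_le_sum fun i _ => mul_le_mul_of_nonneg_left (hf i) (hw₀ i)
    _ = M := by rw [← sum_mul, hw₁, one_mul]

lemma sum_mul_log_sub_boltzmann_eq {α : ℝ} (hα : α ≠ 0) {π : A → ℝ} (hπ : ∑ a, π a = 1)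
    (Q : A → ℝ) (L : ℝ) :
    ∑ a, π a * (Real.log (π a) - (Q a / α - L)) = L - softValue α π Q / α := by
  have summand : ∀ a, π a * (Real.log (π a) - (Q a / α - L))
      = π a * L - π a * (Q a - α * Real.log (π a)) / α := fun a => by field_simp; ring
  rw [sum_congr rfl fun a _ => summand a, sum_sub_distrib, ← sum_mul, hπ, one_mul, softValue,
    sum_div]

lemma softValue_le_of_kl_le {α : ℝ} (hα : 0 < α) {π π' : A → ℝ} (hπ : ∑ a, π a = 1)
    (hπ' : ∑ a, π' a = 1) (Q : A → ℝ) (L : ℝ)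
    (h : ∑ a, π a * (Real.log (π a) - (Q a / α - L))
      ≤ ∑ a, π' a * (Real.log (π' a) - (Q a / α - L))) :
    softValue α π' Q ≤ softValue α π Q := by
  rw [sum_mul_log_sub_boltzmann_eq hα.ne' hπ, sum_mul_log_sub_boltzmann_eq hα.ne' hπ'] at h
  exact (div_le_div_iff_of_pos_right hα).mp (by linarith)

lemma nonpos_of_le_mul_of_forall_le [Finite ι] {D : ι → ℝ} {γ : ℝ} (hγ : γ < 1)
    (h : ∀ M, (∀ j, D j ≤ M) → ∀ i, D i ≤ γ * M) (i : ι) : D i ≤ 0 := by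
  have : Nonempty ι := ⟨i⟩
  obtain ⟨i₀, hi₀⟩ := Finite.exists_max D
  have hmax : D i₀ ≤ γ * D i₀ := h _ hi₀ i₀
  have hmax_nonpos : D i₀ ≤ 0 := by nlinarith
  exact (hi₀ i).trans hmax_nonpos

end

theorem soft_policy_improvement_general
    {S A : Type*} [Fintype S] [Fintype A]
    (r : S → A → ℝ)
    (p : S → A → S → ℝ) (hp0 : ∀ s a s', 0 ≤ p s a s') (hp1 : ∀ s a, ∑ s', p s a s' = 1)
    (γ : ℝ) (hγ0 : 0 ≤ γ) (hγ1 : γ < 1)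
    (α : ℝ) (hα : 0 < α)
    (Pi : Set (S → A → ℝ))
    (hPi : ∀ π' ∈ Pi, (∀ s a, 0 < π' s a) ∧ ∀ s, ∑ a, π' s a = 1)
    (πold πnew : S → A → ℝ) (hπold : πold ∈ Pi) (hπnew : πnew ∈ Pi)
    (Qold Qnew : S → A → ℝ)
    (hQold : ∀ s a, Qold s a = r s a + γ * ∑ s', p s a s' *
      (∑ a', πold s' a' * (Qold s' a' - α * Real.log (πold s' a'))))
    (hQnew : ∀ s a, Qnew s a = r s a + γ * ∑ s', p s a s' *
      (∑ a', πnew s' a' * (Qnew s' a' - α * Real.log (πnew s' a'))))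
    (hmin : ∀ π' ∈ Pi, ∀ s,
      ∑ a, πnew s a * (Real.log (πnew s a) -
          (Qold s a / α - Real.log (∑ a', Real.exp (Qold s a' / α))))
        ≤ ∑ a, π' s a * (Real.log (π' s a) -
          (Qold s a / α - Real.log (∑ a', Real.exp (Qold s a' / α))))) :
    ∀ s a, Qold s a ≤ Qnew s a := by
  obtain ⟨hnew_pos, hnew_sum⟩ := hPi πnew hπnew
  have hold_sum := (hPi πold hπold).2
  have improve : ∀ s, softValue α (πold s) (Qold s) ≤ softValue α (πnew s) (Qold s) :=
    fun s => softValue_le_of_kl_le hα (hnew_sum s) (hold_sum s) _ _ (hmin πold hπold s)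
  have contract : ∀ M, (∀ q : S × A, Qold q.1 q.2 - Qnew q.1 q.2 ≤ M) →
      ∀ q : S × A, Qold q.1 q.2 - Qnew q.1 q.2 ≤ γ * M := by
    rintro M hM ⟨s, a⟩
    have hV : ∀ s', softValue α (πold s') (Qold s') - softValue α (πnew s') (Qnew s') ≤ M := by
      intro s'
      have := sum_mul_le_of_forall_le (fun a => (hnew_pos s' a).le) (hnew_sum s')
        fun a => hM (s', a)
      rw [← softValue_sub_softValue] at this
      linarith [improve s']
    have hgap : Qold s a - Qnew s a = γ * ∑ s', p s a s' *
        (softValue α (πold s') (Qold s') - softValue α (πnew s') (Qnew s')) := by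
      rw [hQold, hQnew, add_sub_add_left_eq_sub, ← mul_sub, ← sum_sub_distrib]
      simp only [softValue, mul_sub]
    rw [hgap]
    exact mul_le_mul_of_nonneg_left (sum_mul_le_of_forall_le (hp0 s a) (hp1 s a) hV) hγ0
  exact fun s a => sub_nonpos.mp (nonpos_of_le_mul_of_forall_le hγ1 contract (s, a))

/-- Soft policy improvement: if π_new minimizes, over the set Π of
full-support policies and for every state, the KL divergence to the Boltzmann
distribution exp(Q^{π_old}/α)/Z, then Q^{π_new} ≥ Q^{π_old} pointwise. -/
theorem soft_policy_improvement
    {S A : Type*} [Fintype S] [Fintype A] [Nonempty S] [Nonempty A]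
    (rmin rmax : ℝ) (r : S → A → ℝ) (hr : ∀ s a, r s a ∈ Set.Icc rmin rmax)
    (p : S → A → S → ℝ) (hp0 : ∀ s a s', 0 ≤ p s a s') (hp1 : ∀ s a, ∑ s', p s a s' = 1)
    (γ : ℝ) (hγ0 : 0 ≤ γ) (hγ1 : γ < 1)
    (α : ℝ) (hα : 0 < α)
    (Pi : Set (S → A → ℝ))
    (hPi : ∀ π' ∈ Pi, (∀ s a, 0 < π' s a) ∧ ∀ s, ∑ a, π' s a = 1)
    (πold πnew : S → A → ℝ) (hπold : πold ∈ Pi) (hπnew : πnew ∈ Pi)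
    (Qold Qnew : S → A → ℝ)
    (hQold : ∀ s a, Qold s a = r s a + γ * ∑ s', p s a s' *
      (∑ a', πold s' a' * (Qold s' a' - α * Real.log (πold s' a'))))
    (hQnew : ∀ s a, Qnew s a = r s a + γ * ∑ s', p s a s' *
      (∑ a', πnew s' a' * (Qnew s' a' - α * Real.log (πnew s' a'))))
    (hmin : ∀ π' ∈ Pi, ∀ s,
      ∑ a, πnew s a * (Real.log (πnew s a) -
          (Qold s a / α - Real.log (∑ a', Real.exp (Qold s a' / α))))
        ≤ ∑ a, π' s a * (Real.log (π' s a) -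
          (Qold s a / α - Real.log (∑ a', Real.exp (Qold s a' / α))))) :
    ∀ s a, Qold s a ≤ Qnew s a :=
  soft_policy_improvement_general r p hp0 hp1 γ hγ0 hγ1 α hα Pi hPi πold πnew hπold hπnew Qold Qnew
    hQold hQnew hmin
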